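/- Let (aₙ) be an unbounded nondecreasing sequence of positive integers and let α = 0^{a₀} 1^{a₁} 0^{a₂} 1^{a₃} ⋯. Then the quasi-isometry class of α is minimal in the partial order of quasi-isometry types: for every string β over {0,1}, if β ≤_QI α then also α ≤_QI β. -/

import Mathlib

/-!
A quasi-isometry `f` from `β` to `α` is coarsely surjective, so it comes within a bounded
distance of every point of `α`. Once the blocks of `α` are longer than twice that distance, every
position `m` of `α` lies close to the middle of a block of its own colour (its own block if that
block is long, otherwise one of the first two long blocks), and `f` hits that middle at a point of
the right colour. Choosing such a preimage for every `m` gives a coarse inverse of `f` that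
preserves colours, i.e. a quasi-isometry from `α` to `β`.
-/

def IsQI {Γ : Type*} (α β : ℕ → Γ) (f : ℕ → ℕ) (A B : ℝ) : Prop :=
  1 ≤ A ∧ 0 ≤ B ∧ (∀ n, α n = β (f n)) ∧
  (∀ x y : ℕ, (1 / A) * |(x : ℝ) - (y : ℝ)| - B ≤ |(f x : ℝ) - (f y : ℝ)| ∧
      |(f x : ℝ) - (f y : ℝ)| ≤ A * |(x : ℝ) - (y : ℝ)| + B) ∧
  (∀ m : ℕ, ∃ x : ℕ, |(m : ℝ) - (f x : ℝ)| ≤ A)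

/-- `α ≤_QI β`: there is a quasi-isometry from `α` to `β`. -/
def QI {Γ : Type*} (α β : ℕ → Γ) : Prop := ∃ f A B, IsQI α β f A B

theorem nat_dist_le_iff {p q r : ℕ} : dist p q ≤ r ↔ p ≤ q + r ∧ q ≤ p + r := by
  rw [Nat.dist_eq, abs_le, neg_le_sub_iff_le_add, sub_le_iff_le_add]
  norm_cast
  omega

namespace IsQI

variable {Γ : Type*} {α β : ℕ → Γ} {f : ℕ → ℕ} {A B : ℝ}

theorem dist_le (hf : IsQI α β f A B) (x y : ℕ) : dist x y ≤ A * (dist (f x) (f y) + B) := by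
  obtain ⟨hA, -, -, hqi, -⟩ := hf
  rw [← inv_mul_le_iff₀ (by linarith), ← one_div, ← sub_le_iff_le_add]
  exact (hqi x y).1

theorem dist_map_le (hf : IsQI α β f A B) (x y : ℕ) : dist (f x) (f y) ≤ A * dist x y + B :=
  (hf.2.2.2.1 x y).2

theorem exists_dist_le (hf : IsQI α β f A B) (m : ℕ) : ∃ x, dist m (f x) ≤ A :=
  hf.2.2.2.2 m

theorem isQI_of_coarse_rightInverse (hf : IsQI β α f A B) {g : ℕ → ℕ} {C : ℝ}
    (hcol : ∀ m, α (f (g m)) = α m) (hnear : ∀ m, dist (f (g m)) m ≤ C) :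
    IsQI α β g (A * (1 + B + 2 * C)) (A * (1 + B + 2 * C)) := by
  obtain ⟨hA, hB, hcolf, -, -⟩ := id hf
  have hC : 0 ≤ C := dist_nonneg.trans (hnear 0)
  set K := A * (1 + B + 2 * C)
  have hK : 1 + B + 2 * C ≤ K := le_mul_of_one_le_left (by linarith) hA
  have hAK : A ≤ K := le_mul_of_one_le_right (by linarith) (by linarith)
  refine ⟨by linarith, by linarith, fun m => (hcol m).symm.trans (hcolf (g m)).symm, ?_, ?_⟩
  · intro x y
    simp only [← Nat.dist_eq]
    have hfg : dist (f (g x)) (f (g y)) ≤ dist x y + 2 * C := by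
      linarith [dist_triangle4 (f (g x)) x y (f (g y)), hnear x, hnear y, dist_comm (f (g y)) y]
    have hgf : dist x y ≤ dist (f (g x)) (f (g y)) + 2 * C := by
      linarith [dist_triangle4 x (f (g x)) (f (g y)) y, hnear x, hnear y, dist_comm x (f (g x))]
    have hd : 0 ≤ dist (g x) (g y) := dist_nonneg
    constructor
    · rw [sub_le_iff_le_add, one_div, inv_mul_le_iff₀ (by linarith)]
      nlinarith [hf.dist_map_le (g x) (g y)]
    · nlinarith [hf.dist_le (g x) (g y), dist_nonneg (x := x) (y := y)]
  · intro n
    refine ⟨f n, ?_⟩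
    rw [← Nat.dist_eq, dist_comm]
    nlinarith [hf.dist_le (g (f n)) n, hnear (f n)]

end IsQI

def HasNearbyMonochromaticBalls {Γ : Type*} (α : ℕ → Γ) : Prop :=
  ∀ r : ℕ, ∃ C : ℝ, ∀ m : ℕ, ∃ p : ℕ, dist p m ≤ C ∧ ∀ q : ℕ, dist q p ≤ r → α q = α m

theorem HasNearbyMonochromaticBalls.qi_symm {Γ : Type*} {α β : ℕ → Γ}
    (hα : HasNearbyMonochromaticBalls α) (h : QI β α) : QI α β := by
  obtain ⟨f, A, B, hf⟩ := h
  obtain ⟨C, hC⟩ := hα ⌈A⌉₊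
  have hpre : ∀ m, ∃ x, α (f x) = α m ∧ dist (f x) m ≤ A + C := by
    intro m
    obtain ⟨p, hpm, hball⟩ := hC m
    obtain ⟨x, hx⟩ := hf.exists_dist_le p
    rw [dist_comm] at hx
    exact ⟨x, hball _ (hx.trans (Nat.le_ceil A)),
      (dist_triangle _ p _).trans (add_le_add hx hpm)⟩
  choose g hcol hnear using hpre
  exact ⟨g, _, _, hf.isQI_of_coarse_rightInverse hcol hnear⟩

def blockStart (a : ℕ → ℕ) (k : ℕ) : ℕ := (Finset.range k).sum a

section Blocks

variable {a : ℕ → ℕ}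

theorem blockStart_succ (a : ℕ → ℕ) (k : ℕ) : blockStart a (k + 1) = blockStart a k + a k :=
  Finset.sum_range_succ a k

theorem blockStart_mono (a : ℕ → ℕ) : Monotone (blockStart a) := fun _ _ h =>
  Finset.sum_le_sum_of_subset (Finset.range_subset_range.2 h)

theorem le_blockStart (hpos : ∀ n, 0 < a n) (k : ℕ) : k ≤ blockStart a k := by
  induction k with
  | zero => exact le_rfl
  | succ k ih => rw [blockStart_succ]; exact Nat.add_le_add ih (hpos k)

theorem exists_mem_block (hpos : ∀ n, 0 < a n) (i : ℕ) :
    ∃ k, blockStart a k ≤ i ∧ i < blockStart a (k + 1) := by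
  have hex : ∃ n, i < blockStart a n := ⟨i + 1, le_blockStart hpos (i + 1)⟩
  obtain ⟨k, hk⟩ : ∃ k, Nat.find hex = k + 1 :=
    Nat.exists_eq_succ_of_ne_zero fun h => by
      have h0 := Nat.find_spec hex
      rw [h] at h0
      simp [blockStart] at h0
  refine ⟨k, not_lt.1 (Nat.find_min hex (by omega)), hk ▸ Nat.find_spec hex⟩

theorem eq_of_mem_block {i k l : ℕ} (hk : blockStart a k ≤ i) (hk' : i < blockStart a (k + 1))
    (hl : blockStart a l ≤ i) (hl' : i < blockStart a (l + 1)) : k = l := by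
  refine le_antisymm (not_lt.1 fun h => ?_) (not_lt.1 fun h => ?_)
  · have := blockStart_mono a (show l + 1 ≤ k from h)
    omega
  · have := blockStart_mono a (show k + 1 ≤ l from h)
    omega

theorem apply_eq_of_mem_block (hpos : ∀ n, 0 < a n) {α : ℕ → Fin 2}
    (hα : ∀ i, α i = if ∃ k ≤ i, k % 2 = 0 ∧ blockStart a k ≤ i ∧ i < blockStart a (k + 1)
      then 0 else 1)
    {i k : ℕ} (h₁ : blockStart a k ≤ i) (h₂ : i < blockStart a (k + 1)) :
    α i = if k % 2 = 0 then 0 else 1 := by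
  rw [hα]
  by_cases hk : k % 2 = 0
  · rw [if_pos hk, if_pos ⟨k, (le_blockStart hpos k).trans h₁, hk, h₁, h₂⟩]
  · rw [if_neg hk, if_neg]
    rintro ⟨l, -, hl, h₁', h₂'⟩
    exact hk (eq_of_mem_block h₁' h₂' h₁ h₂ ▸ hl)

theorem exists_ball_in_block {r k m : ℕ} (hk : 2 * r < a k) (h₁ : blockStart a k ≤ m)
    (h₂ : m < blockStart a (k + 1)) :
    ∃ p, blockStart a k + r ≤ p ∧ p + r < blockStart a (k + 1) ∧ dist p m ≤ r := by
  rw [blockStart_succ] at h₂ ⊢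
  refine ⟨min (max m (blockStart a k + r)) (blockStart a k + a k - 1 - r), by omega, by omega,
    nat_dist_le_iff.2 (by omega)⟩

theorem exists_ge_mod_two_eq (N k : ℕ) :
    ∃ l, N ≤ l ∧ l % 2 = k % 2 ∧ (l = k ∨ l < N + 2 ∧ k < N) := by
  by_cases hk : N ≤ k
  · exact ⟨k, hk, rfl, Or.inl rfl⟩
  by_cases hNk : N % 2 = k % 2
  · exact ⟨N, le_rfl, hNk, Or.inr ⟨by omega, by omega⟩⟩
  · exact ⟨N + 1, by omega, by omega, Or.inr ⟨by omega, by omega⟩⟩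

theorem hasNearbyMonochromaticBalls_of_blocks (hpos : ∀ n, 0 < a n) (hmono : Monotone a)
    (hunb : ∀ N, ∃ n, N < a n) {α : ℕ → Fin 2}
    (hα : ∀ i, α i = if ∃ k ≤ i, k % 2 = 0 ∧ blockStart a k ≤ i ∧ i < blockStart a (k + 1)
      then 0 else 1) :
    HasNearbyMonochromaticBalls α := by
  intro r
  obtain ⟨N, hN⟩ := hunb (2 * r)
  refine ⟨r + blockStart a (N + 2), fun m => ?_⟩
  obtain ⟨k, hk₁, hk₂⟩ := exists_mem_block hpos m
  obtain ⟨l, hNl, hpar, hlk⟩ := exists_ge_mod_two_eq N k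
  have hl : 2 * r < a l := hN.trans_le (hmono hNl)
  obtain ⟨p, hp₁, hp₂, hpm⟩ : ∃ p, blockStart a l + r ≤ p ∧ p + r < blockStart a (l + 1) ∧
      dist p m ≤ r + blockStart a (N + 2) := by
    rcases hlk with rfl | ⟨hlN, hkN⟩
    · obtain ⟨p, hp₁, hp₂, hpm⟩ := exists_ball_in_block hl hk₁ hk₂
      exact ⟨p, hp₁, hp₂, hpm.trans (le_add_of_nonneg_right (Nat.cast_nonneg _))⟩
    · obtain ⟨p, hp₁, hp₂, -⟩ := exists_ball_in_block hl le_rfl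
        (by rw [blockStart_succ]; exact Nat.lt_add_of_pos_right (hpos l))
      have hpN := blockStart_mono a (show l + 1 ≤ N + 2 by omega)
      have hmN := blockStart_mono a (show k + 1 ≤ N + 2 by omega)
      refine ⟨p, hp₁, hp₂, (abs_sub_le_of_nonneg_of_le ?_ ?_ ?_ ?_).trans
        (le_add_of_nonneg_left (Nat.cast_nonneg r))⟩ <;> first | positivity | exact_mod_cast (by omega)
  refine ⟨p, hpm, fun q hq => ?_⟩
  obtain ⟨hq₁, hq₂⟩ := nat_dist_le_iff.1 hq
  rw [apply_eq_of_mem_block hpos hα (k := l) (by omega) (by omega),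
    apply_eq_of_mem_block hpos hα hk₁ hk₂, hpar]

end Blocks

open scoped Classical

theorem unbounded_blocks_minimal (a : ℕ → ℕ) (hpos : ∀ n, 0 < a n) (hmono : Monotone a)
    (hunb : ∀ N, ∃ n, N < a n) (α : ℕ → Fin 2)
    (hα : ∀ i, α i = if ∃ k ≤ i, k % 2 = 0 ∧ (Finset.range k).sum a ≤ i ∧
        i < (Finset.range (k + 1)).sum a then 0 else 1)
    (β : ℕ → Fin 2) (h : QI β α) : QI α β :=
  (hasNearbyMonochromaticBalls_of_blocks hpos hmono hunb hα).qi_symm h
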